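/- Fix k ∈ {2,…,n} and suppose l_1 ∩ l_k = 0. Then the map s induces an isometric isomorphism T(l_1,…,l_k) ⊕ T(l_1,l_k,…,l_n) ≅ T(l_1,…,l_n) of quadratic spaces. -/

import Mathlib

open Finset LinearMap Module

section Defs

variable {F V : Type} [Field F] [AddCommGroup V] [Module F V]

/-- `B` is a symplectic (non-degenerate alternating) bilinear form on `V`. -/
def IsSymplectic (B : V →ₗ[F] V →ₗ[F] F) : Prop :=
  (∀ x, B x x = 0) ∧ ∀ x : V, (∀ y, B x y = 0) → x = 0

/-- `l` is a Lagrangian subspace for `B` : it is isotropic and maximal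
(equal to its own `B`-orthogonal). -/
def IsLagrangian (B : V →ₗ[F] V →ₗ[F] F) (l : Submodule F V) : Prop :=
  (∀ x ∈ l, ∀ y ∈ l, B x y = 0) ∧ ∀ x : V, (∀ y ∈ l, B x y = 0) → x ∈ l

/-- The bilinear form `q(v,w) = ∑_{n ≥ i ≥ j ≥ 1} B(v_i, w_j)` on `n`-tuples
(indexed by `1,…,n`, modelled as functions `ℕ → V`). -/
noncomputable def mqL (n : ℕ) (B : V →ₗ[F] V →ₗ[F] F) :
    (ℕ → V) →ₗ[F] (ℕ → V) →ₗ[F] F :=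
  ∑ i ∈ Icc 1 n, ∑ j ∈ Icc 1 i,
    B.compl₁₂ (LinearMap.proj i) (LinearMap.proj j)

/-- Membership in `K(l_1,…,l_n) = ker(Σ : ⊕ l_i → V)`: each component lies in the
corresponding Lagrangian and the components sum to zero. -/
def InK (n : ℕ) (l : ℕ → Submodule F V) (v : ℕ → V) : Prop :=
  (∀ i ∈ Icc 1 n, v i ∈ l i) ∧ ∑ i ∈ Icc 1 n, v i = 0

/-- `K(l_1,…,l_n)` as a submodule of `ℕ → V` (components outside `{1,…,n}` vanish). -/
noncomputable def Ksub (n : ℕ) (l : ℕ → Submodule F V) : Submodule F (ℕ → V) :=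
  (Submodule.pi Set.univ fun i => if i ∈ Icc 1 n then l i else ⊥) ⊓
    LinearMap.ker (∑ i ∈ Icc 1 n, (LinearMap.proj i : (ℕ → V) →ₗ[F] V))

/-- Cyclic successor on `{1,…,n}`. -/
def nxt (n i : ℕ) : ℕ := if i = n then 1 else i + 1

/-- Cyclic predecessor on `{1,…,n}`. -/
def prv (n i : ℕ) : ℕ := if i = 1 then n else i - 1

end Defs

section Witt

variable {F M N : Type} [Field F] [AddCommGroup M] [Module F M]
  [AddCommGroup N] [Module F N]

/-- The orthogonal direct sum of two bilinear forms. -/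
noncomputable def prodBF (B₁ : M →ₗ[F] M →ₗ[F] F) (B₂ : N →ₗ[F] N →ₗ[F] F) :
    (M × N) →ₗ[F] (M × N) →ₗ[F] F :=
  B₁.compl₁₂ (LinearMap.fst F M N) (LinearMap.fst F M N) +
    B₂.compl₁₂ (LinearMap.snd F M N) (LinearMap.snd F M N)

/-- Two bilinear spaces are isometric. -/
def FormIsometric (B₁ : M →ₗ[F] M →ₗ[F] F) (B₂ : N →ₗ[F] N →ₗ[F] F) : Prop :=
  ∃ e : M ≃ₗ[F] N, ∀ x y, B₂ (e x) (e y) = B₁ x y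

/-- A hyperbolic quadratic space: a non-degenerate symmetric form admitting a
totally isotropic subspace of half the dimension. -/
def IsHyperbolicForm (B : M →ₗ[F] M →ₗ[F] F) : Prop :=
  (∀ x y, B x y = B y x) ∧ (∀ x : M, (∀ y, B x y = 0) → x = 0) ∧
    ∃ L : Submodule F M, (∀ x ∈ L, ∀ y ∈ L, B x y = 0) ∧
      Module.finrank F M = 2 * Module.finrank F L

/-- Two (non-degenerate symmetric) bilinear spaces represent the same class in the
Witt group `W(F)`: they become isometric after adding hyperbolic spaces. -/
def WittEquiv (B₁ : M →ₗ[F] M →ₗ[F] F) (B₂ : N →ₗ[F] N →ₗ[F] F) : Prop :=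
  ∃ (m₁ m₂ : ℕ) (h₁ : (Fin m₁ → F) →ₗ[F] (Fin m₁ → F) →ₗ[F] F)
    (h₂ : (Fin m₂ → F) →ₗ[F] (Fin m₂ → F) →ₗ[F] F),
    IsHyperbolicForm h₁ ∧ IsHyperbolicForm h₂ ∧
      FormIsometric (prodBF B₁ h₁) (prodBF B₂ h₂)

end Witt

section MoreDefs

variable {F V : Type} [Field F] [AddCommGroup V] [Module F V]

/-- `A` is an anti-derivative of the tuple `w` (cyclically indexed by `1,…,n`):
`A_{{i,i+1}} - A_{{i-1,i}} = w i`, where the edge `{i,i+1}` is indexed by `i`. -/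
def IsAntiDeriv (n : ℕ) (w A : ℕ → V) : Prop :=
  ∀ i ∈ Icc 1 n, A i - A (prv n i) = w i

/-- The natural map `s : K(l_1,…,l_k) ⊕ K(l_1,l_k,…,l_n) → K(l_1,…,l_n)`,
identity on each Lagrangian summand.  Here `v` is a `k`-tuple and `w` an
`(n-k+2)`-tuple whose slots `1, 2, 3, …` correspond to `l_1, l_k, l_{k+1}, …`. -/
def chainS (k : ℕ) (v w : ℕ → V) : ℕ → V := fun i =>
  (if i ≤ k then v i else 0) +
    (if i = 1 then w 1 else if k ≤ i then w (i - k + 2) else 0)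

/-- The sequence `l_1, l_k, l_{k+1}, …, l_n` (of length `n - k + 2`). -/
def chainL (k : ℕ) (l : ℕ → Submodule F V) : ℕ → Submodule F V := fun j =>
  if j = 1 then l 1 else l (k + j - 2)

end MoreDefs

section Helpers

variable {F V : Type} [Field F] [AddCommGroup V] [Module F V]

lemma mqL_apply (n : ℕ) (B : V →ₗ[F] V →ₗ[F] F) (x y : ℕ → V) :
    mqL n B x y = ∑ i ∈ Icc 1 n, ∑ j ∈ Icc 1 i, B (x i) (y j) := by
  simp [mqL, LinearMap.sum_apply]

lemma mem_Ksub_iff {n : ℕ} {l : ℕ → Submodule F V} {v : ℕ → V} :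
    v ∈ Ksub n l ↔ (∀ i ∈ Icc 1 n, v i ∈ l i) ∧ (∀ i, i ∉ Icc 1 n → v i = 0) ∧
      ∑ i ∈ Icc 1 n, v i = 0 := by
  simp only [Ksub, Submodule.mem_inf, Submodule.mem_pi, Set.mem_univ, forall_true_left,
    LinearMap.mem_ker, LinearMap.sum_apply, LinearMap.proj_apply]
  constructor
  · rintro ⟨h1, h2⟩
    refine ⟨fun i hi => ?_, fun i hi => ?_, h2⟩
    · have := h1 i; rwa [if_pos hi] at this
    · have := h1 i; rwa [if_neg hi, Submodule.mem_bot] at this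
  · rintro ⟨h1, h2, h3⟩
    refine ⟨fun i => ?_, h3⟩
    by_cases hi : i ∈ Icc 1 n
    · rw [if_pos hi]; exact h1 i hi
    · rw [if_neg hi, Submodule.mem_bot]; exact h2 i hi

/-- The "shifted" part of `chainS`. -/
def shW (k : ℕ) (w : ℕ → V) : ℕ → V := fun i =>
  if i = 1 then w 1 else if k ≤ i then w (i - k + 2) else 0

lemma chainS_eq_add (k : ℕ) (v w : ℕ → V) :
    chainS k v w = (fun i => if i ≤ k then v i else 0) + shW k w := rfl

end Helpers
section Helpers2

variable {F V : Type} [Field F] [AddCommGroup V] [Module F V]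

lemma mqL_trunc {n k : ℕ} (hkn : k ≤ n) (B : V →ₗ[F] V →ₗ[F] F) (x y : ℕ → V)
    (hx : ∀ i, i ∉ Icc 1 k → x i = 0) :
    mqL n B x y = mqL k B x y := by
  rw [mqL_apply, mqL_apply]
  refine (Finset.sum_subset (Finset.Icc_subset_Icc_right hkn) fun i _ hi => ?_).symm
  rw [hx i hi]; simp

lemma cross1 {n k : ℕ} (hk : 2 ≤ k) (hkn : k ≤ n) (B : V →ₗ[F] V →ₗ[F] F) (v w' : ℕ → V)
    (hv0 : ∀ i, i ∉ Icc 1 k → v i = 0) (hvs : ∑ i ∈ Icc 1 k, v i = 0) :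
    ∑ i ∈ Icc 1 n, ∑ j ∈ Icc 1 i, B (v i) (shW k w' j) = B (v k) (w' 2) := by
  have h1 : ∑ i ∈ Icc 1 n, ∑ j ∈ Icc 1 i, B (v i) (shW k w' j)
      = ∑ i ∈ Icc 1 k, ∑ j ∈ Icc 1 i, B (v i) (shW k w' j) :=
    (Finset.sum_subset (Finset.Icc_subset_Icc_right hkn) fun i _ hi => by
      rw [hv0 i hi]; simp).symm
  rw [h1]
  have h2 : ∀ i ∈ Icc 1 k, ∑ j ∈ Icc 1 i, B (v i) (shW k w' j)
      = B (v i) (w' 1) + if i = k then B (v i) (w' 2) else 0 := by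
    intro i hi
    rw [Finset.mem_Icc] at hi
    have hins : Icc 1 i = insert 1 (Icc 2 i) := by
      ext a; simp only [Finset.mem_Icc, Finset.mem_insert]; omega
    have hshW1 : shW k w' 1 = w' 1 := by simp [shW]
    have hrest : ∑ j ∈ Icc 2 i, B (v i) (shW k w' j)
        = if i = k then B (v i) (w' 2) else 0 := by
      have hterm : ∀ j ∈ Icc 2 i, B (v i) (shW k w' j)
          = if j = k then B (v i) (w' 2) else 0 := by
        intro j hj
        rw [Finset.mem_Icc] at hj
        by_cases hjk : j = k
        · rw [if_pos hjk, hjk]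
          have h22 : k - k + 2 = 2 := by omega
          simp only [shW, if_neg (by omega : ¬ k = 1), if_pos le_rfl, h22]
        · rw [if_neg hjk]
          have hz : shW k w' j = 0 := by
            simp only [shW, if_neg (by omega : ¬ j = 1),
              if_neg (by omega : ¬ k ≤ j)]
          rw [hz, map_zero]
      rw [Finset.sum_congr rfl hterm, Finset.sum_ite_eq' (Icc 2 i) k]
      by_cases hik : i = k
      · rw [if_pos (by rw [Finset.mem_Icc]; omega), if_pos hik]
      · rw [if_neg (by rw [Finset.mem_Icc]; omega), if_neg hik]
    rw [hins, Finset.sum_insert (by simp [Finset.mem_Icc]), hshW1, hrest]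
  rw [Finset.sum_congr rfl h2, Finset.sum_add_distrib, Finset.sum_ite_eq' (Icc 1 k) k,
    if_pos (by rw [Finset.mem_Icc]; omega), ← LinearMap.sum_apply, ← map_sum, hvs,
    map_zero, LinearMap.zero_apply, zero_add]

lemma cross2 {n k : ℕ} (hk : 2 ≤ k) (hkn : k ≤ n) (B : V →ₗ[F] V →ₗ[F] F) (w v' : ℕ → V)
    (hv0 : ∀ j, j ∉ Icc 1 k → v' j = 0) (hvs : ∑ j ∈ Icc 1 k, v' j = 0) :
    ∑ i ∈ Icc 1 n, ∑ j ∈ Icc 1 i, B (shW k w i) (v' j) = B (w 1) (v' 1) := by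
  have h0 : ∀ i ∈ Icc 1 n, i ≠ 1 → ∑ j ∈ Icc 1 i, B (shW k w i) (v' j) = 0 := by
    intro i hi hne
    rw [Finset.mem_Icc] at hi
    by_cases hki : k ≤ i
    · have hsub : ∑ j ∈ Icc 1 i, B (shW k w i) (v' j)
          = ∑ j ∈ Icc 1 k, B (shW k w i) (v' j) :=
        (Finset.sum_subset (Finset.Icc_subset_Icc_right hki) fun j _ hj => by
          rw [hv0 j hj, map_zero]).symm
      rw [hsub, ← map_sum, hvs, map_zero]
    · have hz : shW k w i = 0 := by simp only [shW, if_neg hne, if_neg hki]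
      simp [hz]
  rw [Finset.sum_eq_single_of_mem 1 (by rw [Finset.mem_Icc]; omega) h0, Finset.Icc_self,
    Finset.sum_singleton]
  simp [shW]

end Helpers2
section Helpers3

variable {F V : Type} [Field F] [AddCommGroup V] [Module F V]

lemma shW_sigma {k : ℕ} (hk : 2 ≤ k) (w : ℕ → V) (a : ℕ) (ha : 1 ≤ a) :
    shW k w (if a = 1 then 1 else a + k - 2) = w a := by
  by_cases h : a = 1
  · subst h; simp [shW]
  · rw [if_neg h]
    have h1 : ¬ (a + k - 2 = 1) := by omega
    have h2 : k ≤ a + k - 2 := by omega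
    have h3 : a + k - 2 - k + 2 = a := by omega
    simp only [shW, if_neg h1, if_pos h2, h3]

lemma sum_shW {n k : ℕ} (hk : 2 ≤ k) (hkn : k ≤ n) (w : ℕ → V) :
    ∑ i ∈ Icc 1 n, shW k w i = ∑ i ∈ Icc 1 (n - k + 2), w i := by
  classical
  rw [← Finset.sum_filter_of_ne (p := fun i => i = 1 ∨ k ≤ i)
    (fun i _ h => by
      by_cases h1 : i = 1
      · exact Or.inl h1
      · by_cases h2 : k ≤ i
        · exact Or.inr h2
        · exact absurd (show shW k w i = 0 by simp only [shW, if_neg h1, if_neg h2]) h)]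
  refine (Finset.sum_nbij' (i := fun a => if a = 1 then 1 else a + k - 2)
    (j := fun b => if b = 1 then 1 else b - k + 2) ?_ ?_ ?_ ?_ ?_).symm
  · intro a ha
    simp only [Finset.mem_Icc] at ha
    simp only [Finset.mem_filter, Finset.mem_Icc]
    split_ifs <;> omega
  · intro b hb
    simp only [Finset.mem_filter, Finset.mem_Icc] at hb
    simp only [Finset.mem_Icc]
    split_ifs <;> omega
  · intro a ha
    simp only [Finset.mem_Icc] at ha
    split_ifs <;> omega
  · intro b hb
    simp only [Finset.mem_filter, Finset.mem_Icc] at hb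
    split_ifs <;> omega
  · intro a ha
    simp only [Finset.mem_Icc] at ha
    exact (shW_sigma hk w a ha.1).symm

lemma reindexD {n k : ℕ} (hk : 2 ≤ k) (hkn : k ≤ n) (B : V →ₗ[F] V →ₗ[F] F) (w w' : ℕ → V) :
    ∑ i ∈ Icc 1 n, ∑ j ∈ Icc 1 i, B (shW k w i) (shW k w' j)
      = ∑ i ∈ Icc 1 (n - k + 2), ∑ j ∈ Icc 1 i, B (w i) (w' j) := by
  classical
  rw [Finset.sum_sigma', Finset.sum_sigma']
  rw [← Finset.sum_filter_of_ne
    (p := fun p : Σ _ : ℕ, ℕ => (p.1 = 1 ∨ k ≤ p.1) ∧ (p.2 = 1 ∨ k ≤ p.2))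
    (fun p _ h => by
      constructor
      · by_cases h1 : p.1 = 1
        · exact Or.inl h1
        · by_cases h2 : k ≤ p.1
          · exact Or.inr h2
          · exact absurd (by rw [show shW k w p.1 = 0 from by
              simp only [shW, if_neg h1, if_neg h2], map_zero, LinearMap.zero_apply]) h
      · by_cases h1 : p.2 = 1
        · exact Or.inl h1
        · by_cases h2 : k ≤ p.2
          · exact Or.inr h2
          · exact absurd (by rw [show shW k w' p.2 = 0 from by
              simp only [shW, if_neg h1, if_neg h2], map_zero]) h)]
  refine (Finset.sum_nbij'
    (i := fun p => ⟨if p.1 = 1 then 1 else p.1 + k - 2, if p.2 = 1 then 1 else p.2 + k - 2⟩)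
    (j := fun p => ⟨if p.1 = 1 then 1 else p.1 - k + 2, if p.2 = 1 then 1 else p.2 - k + 2⟩)
    ?_ ?_ ?_ ?_ ?_).symm
  · rintro ⟨a, b⟩ hab
    simp only [Finset.mem_sigma, Finset.mem_Icc] at hab
    simp only [Finset.mem_filter, Finset.mem_sigma, Finset.mem_Icc]
    split_ifs <;> omega
  · rintro ⟨a, b⟩ hab
    simp only [Finset.mem_filter, Finset.mem_sigma, Finset.mem_Icc] at hab
    simp only [Finset.mem_sigma, Finset.mem_Icc]
    split_ifs <;> omega
  · rintro ⟨a, b⟩ hab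
    simp only [Finset.mem_sigma, Finset.mem_Icc] at hab
    dsimp only
    simp only [Sigma.mk.inj_iff, heq_eq_eq]
    constructor <;> split_ifs <;> omega
  · rintro ⟨a, b⟩ hab
    simp only [Finset.mem_filter, Finset.mem_sigma, Finset.mem_Icc] at hab
    dsimp only
    simp only [Sigma.mk.inj_iff, heq_eq_eq]
    constructor <;> split_ifs <;> omega
  · rintro ⟨a, b⟩ hab
    simp only [Finset.mem_sigma, Finset.mem_Icc] at hab
    dsimp only
    rw [shW_sigma hk w a hab.1.1, shW_sigma hk w' b hab.2.1]

end Helpers3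
section Helpers4

variable {F V : Type} [Field F] [AddCommGroup V] [Module F V]

lemma mqL_chainS {n k : ℕ} (hk : 2 ≤ k) (hkn : k ≤ n) (B : V →ₗ[F] V →ₗ[F] F)
    (l : ℕ → Submodule F V)
    (hl1 : ∀ x ∈ l 1, ∀ y ∈ l 1, B x y = 0) (hlk : ∀ x ∈ l k, ∀ y ∈ l k, B x y = 0)
    {v v' w w' : ℕ → V}
    (hv : v ∈ Ksub k l) (hv' : v' ∈ Ksub k l)
    (hw : w ∈ Ksub (n - k + 2) (chainL k l)) (hw' : w' ∈ Ksub (n - k + 2) (chainL k l)) :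
    mqL n B (chainS k v w) (chainS k v' w')
      = mqL k B v v' + mqL (n - k + 2) B w w' := by
  obtain ⟨hv1, hv2, hv3⟩ := mem_Ksub_iff.mp hv
  obtain ⟨hv'1, hv'2, hv'3⟩ := mem_Ksub_iff.mp hv'
  obtain ⟨hw1, hw2, hw3⟩ := mem_Ksub_iff.mp hw
  obtain ⟨hw'1, hw'2, hw'3⟩ := mem_Ksub_iff.mp hw'
  have hvv : (fun i => if i ≤ k then v i else 0) = v := by
    funext i
    by_cases h : i ≤ k
    · rw [if_pos h]
    · rw [if_neg h, hv2 i (by simp only [Finset.mem_Icc]; omega)]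
  have hvv' : (fun i => if i ≤ k then v' i else 0) = v' := by
    funext i
    by_cases h : i ≤ k
    · rw [if_pos h]
    · rw [if_neg h, hv'2 i (by simp only [Finset.mem_Icc]; omega)]
  rw [chainS_eq_add, chainS_eq_add, hvv, hvv']
  simp only [map_add, LinearMap.add_apply]
  have hT1 : mqL n B v v' = mqL k B v v' := mqL_trunc hkn B v v' hv2
  have hT2 : mqL n B v (shW k w') = 0 := by
    rw [mqL_apply, cross1 hk hkn B v w' hv2 hv3]
    have h2m : 2 ∈ Icc 1 (n - k + 2) := by simp only [Finset.mem_Icc]; omega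
    have hw'2 : w' 2 ∈ l k := by
      have := hw'1 2 h2m
      simpa [chainL, show k + 2 - 2 = k from by omega] using this
    exact hlk (v k) (hv1 k (by simp only [Finset.mem_Icc]; omega)) (w' 2) hw'2
  have hT3 : mqL n B (shW k w) v' = 0 := by
    rw [mqL_apply, cross2 hk hkn B w v' hv'2 hv'3]
    have h1m : 1 ∈ Icc 1 (n - k + 2) := by simp only [Finset.mem_Icc]; omega
    have hwmem : w 1 ∈ l 1 := by
      have := hw1 1 h1m
      simpa [chainL] using this
    exact hl1 (w 1) hwmem (v' 1) (hv'1 1 (by simp only [Finset.mem_Icc]; omega))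
  have hT4 : mqL n B (shW k w) (shW k w') = mqL (n - k + 2) B w w' := by
    rw [mqL_apply, mqL_apply]
    exact reindexD hk hkn B w w'
  rw [hT1, hT2, hT3, hT4]
  abel

lemma chainS_mem {n k : ℕ} (hk : 2 ≤ k) (hkn : k ≤ n) {l : ℕ → Submodule F V}
    {v w : ℕ → V} (hv : v ∈ Ksub k l) (hw : w ∈ Ksub (n - k + 2) (chainL k l)) :
    chainS k v w ∈ Ksub n l := by
  obtain ⟨hv1, hv2, hv3⟩ := mem_Ksub_iff.mp hv
  obtain ⟨hw1, hw2, hw3⟩ := mem_Ksub_iff.mp hw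
  rw [mem_Ksub_iff]
  refine ⟨?_, ?_, ?_⟩
  · intro i hi
    rw [Finset.mem_Icc] at hi
    simp only [chainS]
    rcases eq_or_ne i 1 with rfl | h1
    · rw [if_pos (by omega), if_pos rfl]
      have hwm : w 1 ∈ l 1 := by
        have := hw1 1 (by simp only [Finset.mem_Icc]; omega)
        simpa [chainL] using this
      exact add_mem (hv1 1 (by simp only [Finset.mem_Icc]; omega)) hwm
    · by_cases hik : i ≤ k
      · rw [if_pos hik, if_neg h1]
        by_cases hki : k ≤ i
        · have hik' : i = k := le_antisymm hik hki
          subst hik'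
          rw [if_pos le_rfl, show i - i + 2 = 2 from by omega]
          have hwm : w 2 ∈ l i := by
            have := hw1 2 (by simp only [Finset.mem_Icc]; omega)
            simpa [chainL, show i + 2 - 2 = i from by omega] using this
          exact add_mem (hv1 i (by simp only [Finset.mem_Icc]; omega)) hwm
        · rw [if_neg hki, add_zero]
          exact hv1 i (by simp only [Finset.mem_Icc]; omega)
      · rw [if_neg hik, if_neg h1, if_pos (by omega : k ≤ i), zero_add]
        have : w (i - k + 2) ∈ chainL k l (i - k + 2) :=
          hw1 (i - k + 2) (by simp only [Finset.mem_Icc]; omega)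
        simpa [chainL, show ¬ (i - k + 2 = 1) from by omega,
          show k + (i - k + 2) - 2 = i from by omega] using this
  · intro i hi
    rw [Finset.mem_Icc] at hi
    simp only [chainS]
    rcases Nat.lt_or_ge i 1 with h0 | h0
    · have hi0 : i = 0 := by omega
      subst hi0
      rw [if_pos (by omega : (0:ℕ) ≤ k), if_neg (by omega : ¬ (0:ℕ) = 1),
        if_neg (by omega : ¬ k ≤ 0), hv2 0 (by simp only [Finset.mem_Icc]; omega), add_zero]
    · have hin : n < i := by omega
      have e1 : ¬ i ≤ k := by omega
      have e2 : ¬ i = 1 := by omega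
      have e3 : k ≤ i := by omega
      have e4 : i - k + 2 ∉ Icc 1 (n - k + 2) := by simp only [Finset.mem_Icc]; omega
      rw [if_neg e1, if_neg e2, if_pos e3, hw2 _ e4, add_zero]
  · simp only [chainS]
    rw [Finset.sum_add_distrib]
    have hfst : ∑ i ∈ Icc 1 n, (if i ≤ k then v i else 0) = ∑ i ∈ Icc 1 k, v i := by
      rw [← Finset.sum_subset (Finset.Icc_subset_Icc_right hkn)
        (fun i hm hi => by
          rw [Finset.mem_Icc] at hm hi
          rw [if_neg (by omega : ¬ i ≤ k)])]
      exact Finset.sum_congr rfl fun i hi => by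
        rw [Finset.mem_Icc] at hi; rw [if_pos (by omega)]
    have hsnd : ∑ i ∈ Icc 1 n,
        (if i = 1 then w 1 else if k ≤ i then w (i - k + 2) else 0)
        = ∑ i ∈ Icc 1 (n - k + 2), w i := sum_shW hk hkn w
    rw [hfst, hsnd, hv3, hw3, add_zero]

end Helpers4
section Helpers5

variable {F V : Type} [Field F] [AddCommGroup V] [Module F V]

lemma lagrangian_sup_eq_top [FiniteDimensional F V]
    (B : V →ₗ[F] V →ₗ[F] F) (hB : IsSymplectic B) {l1 lk : Submodule F V}
    (h1 : IsLagrangian B l1) (hk : IsLagrangian B lk) (hd : l1 ⊓ lk = ⊥) :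
    l1 ⊔ lk = ⊤ := by
  have halt : B.IsAlt := hB.1
  have hrefl : B.IsRefl := halt.isRefl
  have hnd : LinearMap.BilinForm.Nondegenerate B :=
    ⟨fun x hx => hB.2 x hx, fun y hy => hB.2 y fun x => hrefl _ _ (hy x)⟩
  have horth : LinearMap.BilinForm.orthogonal B (l1 ⊔ lk) = ⊥ := by
    rw [Submodule.eq_bot_iff]
    intro x hx
    rw [LinearMap.BilinForm.mem_orthogonal_iff] at hx
    have hx1 : x ∈ l1 := h1.2 x fun y hy => hrefl _ _ (hx y (Submodule.mem_sup_left hy))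
    have hxk : x ∈ lk := hk.2 x fun y hy => hrefl _ _ (hx y (Submodule.mem_sup_right hy))
    have : x ∈ l1 ⊓ lk := Submodule.mem_inf.mpr ⟨hx1, hxk⟩
    rwa [hd, Submodule.mem_bot] at this
  have hfr := LinearMap.BilinForm.finrank_orthogonal hnd (l1 ⊔ lk)
  rw [horth, finrank_bot] at hfr
  have hle := Submodule.finrank_le (l1 ⊔ lk)
  exact Submodule.eq_top_of_finrank_eq (by omega)

lemma chainS_eq_zero {n k : ℕ} (hk : 2 ≤ k) (hkn : k ≤ n) {l : ℕ → Submodule F V}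
    (hdisj : l 1 ⊓ l k = ⊥) {v w : ℕ → V}
    (hv : v ∈ Ksub k l) (hw : w ∈ Ksub (n - k + 2) (chainL k l))
    (h : chainS k v w = 0) : v = 0 ∧ w = 0 := by
  obtain ⟨hv1, hv2, hv3⟩ := mem_Ksub_iff.mp hv
  obtain ⟨hw1, hw2, hw3⟩ := mem_Ksub_iff.mp hw
  have hc : ∀ i, chainS k v w i = 0 := fun i => congrFun h i
  -- middle components of v vanish
  have hmid : ∀ i, 2 ≤ i → i < k → v i = 0 := by
    intro i h2 hik
    have := hc i
    simpa [chainS, show i ≤ k from by omega, show ¬ i = 1 from by omega,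
      show ¬ k ≤ i from by omega] using this
  -- tail components of w vanish
  have htail : ∀ j, 3 ≤ j → w j = 0 := by
    intro j h3
    by_cases hjm : j ≤ n - k + 2
    · have := hc (j + k - 2)
      have e1 : ¬ j + k - 2 ≤ k := by omega
      have e2 : ¬ j + k - 2 = 1 := by omega
      have e3 : k ≤ j + k - 2 := by omega
      have e4 : j + k - 2 - k + 2 = j := by omega
      simpa [chainS, e1, e2, e3, e4] using this
    · exact hw2 j (by simp only [Finset.mem_Icc]; omega)
  have h1 : v 1 + w 1 = 0 := by
    have := hc 1
    simpa [chainS, show (1:ℕ) ≤ k from by omega, show ¬ k ≤ 1 from by omega] using this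
  have hkk : v k + w 2 = 0 := by
    have := hc k
    have e : k - k + 2 = 2 := by omega
    simpa [chainS, show ¬ k = 1 from by omega, e] using this
  have hsum : v 1 + v k = 0 := by
    have hdecomp : ∑ i ∈ Icc 1 k, v i = v 1 + v k := by
      rw [Finset.sum_eq_add_of_mem 1 k (by simp only [Finset.mem_Icc]; omega)
        (by simp only [Finset.mem_Icc]; omega) (by omega)
        (fun c hc' ⟨hc1, hck⟩ => by
          rw [Finset.mem_Icc] at hc'
          exact hmid c (by omega) (by omega))]
    rw [← hdecomp, hv3]
  have hv1k : v 1 = 0 := by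
    have hm : v 1 ∈ l 1 ⊓ l k := by
      refine Submodule.mem_inf.mpr ⟨hv1 1 (by simp only [Finset.mem_Icc]; omega), ?_⟩
      have : v 1 = -v k := by
        rw [eq_neg_iff_add_eq_zero]; exact hsum
      rw [this]
      exact neg_mem (hv1 k (by simp only [Finset.mem_Icc]; omega))
    rwa [hdisj, Submodule.mem_bot] at hm
  have hvk : v k = 0 := by
    have := hsum; rw [hv1k, zero_add] at this; exact this
  have hw1' : w 1 = 0 := by have := h1; rw [hv1k, zero_add] at this; exact this
  have hw2' : w 2 = 0 := by have := hkk; rw [hvk, zero_add] at this; exact this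
  constructor
  · funext i
    by_cases hm : i ∈ Icc 1 k
    · rw [Finset.mem_Icc] at hm
      rcases eq_or_ne i 1 with rfl | hne1
      · exact hv1k
      · rcases eq_or_ne i k with rfl | hnek
        · exact hvk
        · exact hmid i (by omega) (by omega)
    · exact hv2 i hm
  · funext j
    by_cases hm : j ∈ Icc 1 (n - k + 2)
    · rw [Finset.mem_Icc] at hm
      match j, hm with
      | 1, _ => exact hw1'
      | 2, _ => exact hw2'
      | (j+3), _ => exact htail _ (by omega)
    · exact hw2 j hm

end Helpers5
section Helpers6

variable {F V : Type} [Field F] [AddCommGroup V] [Module F V]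

lemma chainS_surj_aux {n k : ℕ} (hk : 2 ≤ k) (hkn : k ≤ n) {l : ℕ → Submodule F V}
    (hsup : l 1 ⊔ l k = ⊤) {z : ℕ → V} (hz : z ∈ Ksub n l) :
    ∃ v ∈ Ksub k l, ∃ w ∈ Ksub (n - k + 2) (chainL k l), chainS k v w = z := by
  classical
  obtain ⟨hz1, hz2, hz3⟩ := mem_Ksub_iff.mp hz
  set c : V := ∑ i ∈ Icc 2 (k - 1), z i with hc
  have hmem : -c ∈ l 1 ⊔ l k := hsup ▸ Submodule.mem_top
  obtain ⟨a, ha, b, hb, hab⟩ := Submodule.mem_sup.mp hmem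
  set v : ℕ → V := fun i =>
    if i = 1 then a else if i = k then b else if i ∈ Icc 2 (k - 1) then z i else 0 with hvdef
  set w : ℕ → V := fun j =>
    if j = 1 then z 1 - a else if j = 2 then z k - b
      else if j ∈ Icc 3 (n - k + 2) then z (k + j - 2) else 0 with hwdef
  have hv1 : v 1 = a := by simp [hvdef]
  have hvk : v k = b := by simp [hvdef, show ¬ k = 1 from by omega]
  have hvmid : ∀ i, 2 ≤ i → i ≤ k - 1 → v i = z i := by
    intro i h2 h3
    simp only [hvdef]
    rw [if_neg (by omega : ¬ i = 1), if_neg (by omega : ¬ i = k),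
      if_pos (by rw [Finset.mem_Icc]; omega)]
  have hvout : ∀ i, ¬ (1 ≤ i ∧ i ≤ k) → v i = 0 := by
    intro i hi
    simp only [hvdef]
    rw [if_neg (by omega : ¬ i = 1), if_neg (by omega : ¬ i = k),
      if_neg (by rw [Finset.mem_Icc]; omega)]
  have hw1 : w 1 = z 1 - a := by simp [hwdef]
  have hw2 : w 2 = z k - b := by simp [hwdef]
  have hwtail : ∀ j, 3 ≤ j → j ≤ n - k + 2 → w j = z (k + j - 2) := by
    intro j h3 hm
    simp only [hwdef]
    rw [if_neg (by omega : ¬ j = 1), if_neg (by omega : ¬ j = 2),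
      if_pos (by rw [Finset.mem_Icc]; omega)]
  have hwout : ∀ j, ¬ (1 ≤ j ∧ j ≤ n - k + 2) → w j = 0 := by
    intro j hj
    simp only [hwdef]
    rw [if_neg (by omega : ¬ j = 1), if_neg (by omega : ¬ j = 2),
      if_neg (by rw [Finset.mem_Icc]; omega)]
  have hIck : Icc 1 k = insert 1 (insert k (Icc 2 (k - 1))) := by
    ext i; simp only [Finset.mem_Icc, Finset.mem_insert]; omega
  have hsumv : ∑ i ∈ Icc 1 k, v i = a + (b + c) := by
    rw [hIck, Finset.sum_insert (by simp only [Finset.mem_insert, Finset.mem_Icc]; omega),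
      Finset.sum_insert (by simp only [Finset.mem_Icc]; omega), hv1, hvk]
    have e3 : ∑ i ∈ Icc 2 (k - 1), v i = c := by
      refine Finset.sum_congr rfl fun i hi => ?_
      rw [Finset.mem_Icc] at hi
      exact hvmid i hi.1 hi.2
    rw [e3]
  have hvK : v ∈ Ksub k l := by
    rw [mem_Ksub_iff]
    refine ⟨fun i hi => ?_, fun i hi => ?_, ?_⟩
    · rw [Finset.mem_Icc] at hi
      rcases eq_or_ne i 1 with rfl | h1
      · rw [hv1]; exact ha
      · rcases eq_or_ne i k with heq | hk'
        · rw [heq, hvk]; exact hb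
        · rw [hvmid i (by omega) (by omega)]
          exact hz1 i (by rw [Finset.mem_Icc]; omega)
    · rw [Finset.mem_Icc] at hi
      exact hvout i hi
    · rw [hsumv, show a + (b + c) = (a + b) + c from by abel, hab, neg_add_cancel]
  have hIcm : Icc 1 (n - k + 2) = insert 1 (insert 2 (Icc 3 (n - k + 2))) := by
    ext i; simp only [Finset.mem_Icc, Finset.mem_insert]; omega
  have hItail : ∑ j ∈ Icc 3 (n - k + 2), w j = ∑ i ∈ Icc (k + 1) n, z i := by
    have hterm : ∀ j ∈ Icc 3 (n - k + 2), w j = z (k + j - 2) := by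
      intro j hj
      rw [Finset.mem_Icc] at hj
      exact hwtail j hj.1 hj.2
    rw [Finset.sum_congr rfl hterm]
    refine Finset.sum_nbij' (i := fun j => k + j - 2) (j := fun i => i - k + 2)
      ?_ ?_ ?_ ?_ ?_
    · intro x hx; rw [Finset.mem_Icc] at hx ⊢; omega
    · intro x hx; rw [Finset.mem_Icc] at hx ⊢; omega
    · intro x hx; rw [Finset.mem_Icc] at hx; omega
    · intro x hx; rw [Finset.mem_Icc] at hx; omega
    · intro x hx; rfl
  have hsplit : ∑ i ∈ Icc 1 k, z i + ∑ i ∈ Icc (k + 1) n, z i = 0 := by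
    rw [← Finset.sum_union (by
      simp only [Finset.disjoint_left, Finset.mem_Icc]
      intro x hx1 hx2; omega)]
    rw [show Icc 1 k ∪ Icc (k + 1) n = Icc 1 n from by
      ext i; simp only [Finset.mem_union, Finset.mem_Icc]; omega]
    exact hz3
  have hsumzk : ∑ i ∈ Icc 1 k, z i = z 1 + (z k + c) := by
    rw [hIck, Finset.sum_insert (by simp only [Finset.mem_insert, Finset.mem_Icc]; omega),
      Finset.sum_insert (by simp only [Finset.mem_Icc]; omega)]
  have hwK : w ∈ Ksub (n - k + 2) (chainL k l) := by
    rw [mem_Ksub_iff]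
    refine ⟨fun j hj => ?_, fun j hj => ?_, ?_⟩
    · rw [Finset.mem_Icc] at hj
      rcases eq_or_ne j 1 with rfl | h1
      · rw [hw1, show chainL k l 1 = l 1 from by simp [chainL]]
        exact sub_mem (hz1 1 (by rw [Finset.mem_Icc]; omega)) ha
      · rcases eq_or_ne j 2 with rfl | h2
        · rw [hw2, show chainL k l 2 = l k from by
            simp [chainL, show k + 2 - 2 = k from by omega]]
          exact sub_mem (hz1 k (by rw [Finset.mem_Icc]; omega)) hb
        · rw [hwtail j (by omega) (by omega),
            show chainL k l j = l (k + j - 2) from by simp [chainL, h1]]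
          exact hz1 (k + j - 2) (by rw [Finset.mem_Icc]; omega)
    · rw [Finset.mem_Icc] at hj
      exact hwout j hj
    · rw [hIcm, Finset.sum_insert (by simp only [Finset.mem_insert, Finset.mem_Icc]; omega),
        Finset.sum_insert (by simp only [Finset.mem_Icc]; omega), hItail, hw1, hw2]
      have hS : ∑ i ∈ Icc (k + 1) n, z i = -(z 1 + (z k + c)) := by
        rw [eq_neg_iff_add_eq_zero, add_comm, ← hsumzk]
        exact hsplit
      rw [hS, show z 1 - a + (z k - b + -(z 1 + (z k + c))) = -(a + b) + -c from by abel,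
        hab, neg_neg]
      exact add_neg_cancel c
  refine ⟨v, hvK, w, hwK, ?_⟩
  funext i
  simp only [chainS]
  by_cases hi0 : i = 0
  · subst hi0
    rw [if_pos (by omega : (0:ℕ) ≤ k), if_neg (by omega : ¬ (0:ℕ) = 1),
      if_neg (by omega : ¬ k ≤ 0), add_zero, hvout 0 (by omega)]
    exact (hz2 0 (by rw [Finset.mem_Icc]; omega)).symm
  · rcases eq_or_ne i 1 with rfl | h1
    · rw [if_pos (by omega : (1:ℕ) ≤ k), if_pos rfl, hv1, hw1]
      abel
    · rcases eq_or_ne i k with heq | hik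
      · rw [if_pos (le_of_eq heq), if_neg h1, if_pos (ge_of_eq heq), heq, hvk,
          show k - k + 2 = 2 from by omega, hw2]
        abel
      · by_cases hil : i ≤ k
        · rw [if_pos hil, if_neg h1, if_neg (by omega : ¬ k ≤ i), add_zero,
            hvmid i (by omega) (by omega)]
        · rw [if_neg hil, if_neg h1, if_pos (by omega : k ≤ i), zero_add]
          by_cases hin : i ≤ n
          · rw [hwtail (i - k + 2) (by omega) (by omega),
              show k + (i - k + 2) - 2 = i from by omega]
          · rw [hwout (i - k + 2) (by omega)]
            exact (hz2 i (by rw [Finset.mem_Icc]; omega)).symm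

end Helpers6
section Helpers7

variable {F V : Type} [Field F] [AddCommGroup V] [Module F V]

/-- `chainS` as a linear map on pairs of tuples. -/
noncomputable def SlinAux (k : ℕ) : ((ℕ → V) × (ℕ → V)) →ₗ[F] (ℕ → V) where
  toFun p := chainS k p.1 p.2
  map_add' p q := by
    funext i
    simp only [chainS, Prod.fst_add, Prod.snd_add, Pi.add_apply]
    split_ifs <;> abel
  map_smul' c p := by
    funext i
    simp only [chainS, Prod.smul_fst, Prod.smul_snd, Pi.smul_apply, RingHom.id_apply]
    split_ifs <;> simp [smul_add]

/-- The bundled map `s : K(l_1,…,l_k) ⊕ K(l_1,l_k,…,l_n) → K(l_1,…,l_n)`. -/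
noncomputable def chainSL {n k : ℕ} (hk : 2 ≤ k) (hkn : k ≤ n) (l : ℕ → Submodule F V) :
    (↥(Ksub k l) × ↥(Ksub (n - k + 2) (chainL k l))) →ₗ[F] ↥(Ksub n l) :=
  LinearMap.codRestrict (Ksub n l)
    ((SlinAux k).comp (((Ksub k l).subtype).prodMap ((Ksub (n - k + 2) (chainL k l)).subtype)))
    (fun p => chainS_mem hk hkn p.1.2 p.2.2)

lemma chainSL_coe {n k : ℕ} (hk : 2 ≤ k) (hkn : k ≤ n) (l : ℕ → Submodule F V)
    (p : ↥(Ksub k l) × ↥(Ksub (n - k + 2) (chainL k l))) :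
    (chainSL hk hkn l p : ℕ → V) = chainS k (p.1 : ℕ → V) (p.2 : ℕ → V) := rfl

lemma chainSL_bijective {n k : ℕ} (hk : 2 ≤ k) (hkn : k ≤ n) [FiniteDimensional F V]
    (B : V →ₗ[F] V →ₗ[F] F) (hB : IsSymplectic B) (l : ℕ → Submodule F V)
    (hl1 : IsLagrangian B (l 1)) (hlk : IsLagrangian B (l k))
    (hdisj : l 1 ⊓ l k = ⊥) :
    Function.Bijective (chainSL (F := F) (V := V) hk hkn l) := by
  constructor
  · rw [← LinearMap.ker_eq_bot (M := ↥(Ksub k l) × ↥(Ksub (n - k + 2) (chainL k l)))]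
    rw [Submodule.eq_bot_iff]
    rintro ⟨x, y⟩ hxy
    rw [LinearMap.mem_ker] at hxy
    have h0 : chainS k (x : ℕ → V) (y : ℕ → V) = 0 := by
      have := congrArg (Subtype.val) hxy
      rwa [chainSL_coe] at this
    obtain ⟨hx0, hy0⟩ := chainS_eq_zero hk hkn hdisj x.2 y.2 h0
    exact Prod.ext (Subtype.ext hx0) (Subtype.ext hy0)
  · intro z
    obtain ⟨v, hv, w, hw, hvw⟩ := chainS_surj_aux hk hkn
      (lagrangian_sup_eq_top B hB hl1 hlk hdisj) z.2
    exact ⟨(⟨v, hv⟩, ⟨w, hw⟩), Subtype.ext hvw⟩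

end Helpers7
section Helpers8

variable {F M N P : Type} [Field F] [AddCommGroup M] [Module F M]
  [AddCommGroup N] [Module F N] [AddCommGroup P] [Module F P]

lemma quot_equiv_of_isometry (QM : M →ₗ[F] M →ₗ[F] F) (QN : N →ₗ[F] N →ₗ[F] F)
    (QP : P →ₗ[F] P →ₗ[F] F) (S : (M × N) →ₗ[F] P) (hbij : Function.Bijective S)
    (hiso : ∀ (a : M) (b : N) (a' : M) (b' : N),
      QP (S (a, b)) (S (a', b')) = QM a a' + QN b b') :
    ∃ e : ((M ⧸ LinearMap.ker QM) × (N ⧸ LinearMap.ker QN)) ≃ₗ[F] (P ⧸ LinearMap.ker QP),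
      ∀ (a : M) (b : N),
        e (Submodule.Quotient.mk a, Submodule.Quotient.mk b)
          = Submodule.Quotient.mk (S (a, b)) := by
  have hkerS : ∀ (a : M) (b : N), QM a = 0 → QN b = 0 → QP (S (a, b)) = 0 := by
    intro a b ha hb
    apply LinearMap.ext
    intro z
    obtain ⟨p, hp⟩ := hbij.2 z
    rw [← hp, show p = (p.1, p.2) from rfl, hiso, ha, hb]
    simp
  have hkerS' : ∀ (a : M) (b : N), QP (S (a, b)) = 0 → QM a = 0 ∧ QN b = 0 := by
    intro a b h
    constructor
    · apply LinearMap.ext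
      intro c
      have h1 := hiso a b c 0
      rw [h, map_zero (QN b), add_zero] at h1
      rw [← h1]
      simp
    · apply LinearMap.ext
      intro c
      have h1 := hiso a b 0 c
      rw [h, map_zero (QM a), zero_add] at h1
      rw [← h1]
      simp
  have hker1 : LinearMap.ker QM ≤ LinearMap.ker
      (((LinearMap.ker QP).mkQ).comp (S.comp (LinearMap.inl F M N))) := by
    intro a ha
    rw [LinearMap.mem_ker] at ha ⊢
    rw [LinearMap.comp_apply, LinearMap.comp_apply, LinearMap.inl_apply,
      Submodule.mkQ_apply, Submodule.Quotient.mk_eq_zero, LinearMap.mem_ker]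
    exact hkerS a 0 ha (map_zero _)
  have hker2 : LinearMap.ker QN ≤ LinearMap.ker
      (((LinearMap.ker QP).mkQ).comp (S.comp (LinearMap.inr F M N))) := by
    intro b hb
    rw [LinearMap.mem_ker] at hb ⊢
    rw [LinearMap.comp_apply, LinearMap.comp_apply, LinearMap.inr_apply,
      Submodule.mkQ_apply, Submodule.Quotient.mk_eq_zero, LinearMap.mem_ker]
    exact hkerS 0 b (map_zero _) hb
  set φ₁ := Submodule.liftQ (LinearMap.ker QM)
    (((LinearMap.ker QP).mkQ).comp (S.comp (LinearMap.inl F M N))) hker1 with hφ₁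
  set φ₂ := Submodule.liftQ (LinearMap.ker QN)
    (((LinearMap.ker QP).mkQ).comp (S.comp (LinearMap.inr F M N))) hker2 with hφ₂
  set φ := φ₁.coprod φ₂ with hφdef
  have hφ : ∀ (a : M) (b : N),
      φ (Submodule.Quotient.mk a, Submodule.Quotient.mk b)
        = Submodule.Quotient.mk (S (a, b)) := by
    intro a b
    rw [hφdef, LinearMap.coprod_apply, hφ₁, hφ₂, Submodule.liftQ_apply, Submodule.liftQ_apply]
    simp only [LinearMap.comp_apply, LinearMap.inl_apply, LinearMap.inr_apply,
      Submodule.mkQ_apply]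
    rw [← Submodule.Quotient.mk_add, ← map_add]
    congr 2
    exact Prod.ext (add_zero a) (zero_add b)
  have hsurj : Function.Surjective φ := by
    intro t
    obtain ⟨z, hz⟩ := Submodule.Quotient.mk_surjective _ t
    obtain ⟨p, hp⟩ := hbij.2 z
    refine ⟨(Submodule.Quotient.mk p.1, Submodule.Quotient.mk p.2), ?_⟩
    rw [hφ p.1 p.2, show (p.1, p.2) = p from rfl, hp, hz]
  have hinj : Function.Injective φ := by
    rw [← LinearMap.ker_eq_bot]
    rw [Submodule.eq_bot_iff]
    rintro ⟨u1, u2⟩ hu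
    obtain ⟨a, rfl⟩ := Submodule.Quotient.mk_surjective _ u1
    obtain ⟨b, rfl⟩ := Submodule.Quotient.mk_surjective _ u2
    rw [LinearMap.mem_ker, hφ, Submodule.Quotient.mk_eq_zero, LinearMap.mem_ker] at hu
    obtain ⟨ha, hb⟩ := hkerS' a b hu
    rw [Prod.mk_eq_zero]
    constructor
    · rw [Submodule.Quotient.mk_eq_zero, LinearMap.mem_ker]
      exact ha
    · rw [Submodule.Quotient.mk_eq_zero, LinearMap.mem_ker]
      exact hb
  exact ⟨LinearEquiv.ofBijective φ ⟨hinj, hsurj⟩, fun a b => hφ a b⟩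

end Helpers8

set_option maxHeartbeats 3200000 in
/-- For `2 ≤ k ≤ n` with `l_1 ∩ l_k = 0`, the map `s` induces an
isometric isomorphism `T(l_1,…,l_k) ⊕ T(l_1,l_k,…,l_n) ≅ T(l_1,…,l_n)` of the
quadratic spaces `T(…) = K(…)/ker q` with their induced forms. -/
theorem maslov_chain_isometric_iso
    {F V : Type} [Field F] [AddCommGroup V] [Module F V] [FiniteDimensional F V]
    (hchar : (2 : F) ≠ 0) (n k : ℕ) (hk : 2 ≤ k) (hkn : k ≤ n)
    (B : V →ₗ[F] V →ₗ[F] F) (hB : IsSymplectic B)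
    (l : ℕ → Submodule F V) (hl : ∀ i ∈ Icc 1 n, IsLagrangian B (l i))
    (hdisj : l 1 ⊓ l k = ⊥)
    (t1 : (↥(Ksub k l) ⧸ LinearMap.ker ((mqL k B).domRestrict₁₂ (Ksub k l) (Ksub k l))) →ₗ[F]
          (↥(Ksub k l) ⧸ LinearMap.ker ((mqL k B).domRestrict₁₂ (Ksub k l) (Ksub k l))) →ₗ[F] F)
    (ht1 : ∀ x y : ↥(Ksub k l),
      t1 (Submodule.Quotient.mk x) (Submodule.Quotient.mk y) = mqL k B x y)
    (t2 : (↥(Ksub (n - k + 2) (chainL k l)) ⧸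
            LinearMap.ker ((mqL (n - k + 2) B).domRestrict₁₂
              (Ksub (n - k + 2) (chainL k l)) (Ksub (n - k + 2) (chainL k l)))) →ₗ[F]
          (↥(Ksub (n - k + 2) (chainL k l)) ⧸
            LinearMap.ker ((mqL (n - k + 2) B).domRestrict₁₂
              (Ksub (n - k + 2) (chainL k l)) (Ksub (n - k + 2) (chainL k l)))) →ₗ[F] F)
    (ht2 : ∀ x y : ↥(Ksub (n - k + 2) (chainL k l)),
      t2 (Submodule.Quotient.mk x) (Submodule.Quotient.mk y) = mqL (n - k + 2) B x y)
    (t3 : (↥(Ksub n l) ⧸ LinearMap.ker ((mqL n B).domRestrict₁₂ (Ksub n l) (Ksub n l))) →ₗ[F]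
          (↥(Ksub n l) ⧸ LinearMap.ker ((mqL n B).domRestrict₁₂ (Ksub n l) (Ksub n l))) →ₗ[F] F)
    (ht3 : ∀ x y : ↥(Ksub n l),
      t3 (Submodule.Quotient.mk x) (Submodule.Quotient.mk y) = mqL n B x y) :
    ∃ e : ((↥(Ksub k l) ⧸ LinearMap.ker ((mqL k B).domRestrict₁₂ (Ksub k l) (Ksub k l))) ×
            (↥(Ksub (n - k + 2) (chainL k l)) ⧸
              LinearMap.ker ((mqL (n - k + 2) B).domRestrict₁₂
                (Ksub (n - k + 2) (chainL k l)) (Ksub (n - k + 2) (chainL k l))))) ≃ₗ[F]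
          (↥(Ksub n l) ⧸ LinearMap.ker ((mqL n B).domRestrict₁₂ (Ksub n l) (Ksub n l))),
      (∀ x y, t3 (e x) (e y) = prodBF t1 t2 x y) ∧
        ∀ (x : ↥(Ksub k l)) (y : ↥(Ksub (n - k + 2) (chainL k l))) (z : ↥(Ksub n l)),
          (z : ℕ → V) = chainS k x y →
            e (Submodule.Quotient.mk x, Submodule.Quotient.mk y) =
              Submodule.Quotient.mk z := by
  classical
  have hl1 : IsLagrangian B (l 1) := hl 1 (by rw [Finset.mem_Icc]; omega)
  have hlk : IsLagrangian B (l k) := hl k (by rw [Finset.mem_Icc]; omega)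
  have hbij : Function.Bijective (chainSL (F := F) (V := V) hk hkn l) :=
    chainSL_bijective hk hkn B hB l hl1 hlk hdisj
  have hiso : ∀ (a : ↥(Ksub k l)) (b : ↥(Ksub (n - k + 2) (chainL k l)))
      (a' : ↥(Ksub k l)) (b' : ↥(Ksub (n - k + 2) (chainL k l))),
      ((mqL n B).domRestrict₁₂ (Ksub n l) (Ksub n l)) (chainSL hk hkn l (a, b))
          (chainSL hk hkn l (a', b'))
        = ((mqL k B).domRestrict₁₂ (Ksub k l) (Ksub k l)) a a'
          + ((mqL (n - k + 2) B).domRestrict₁₂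
              (Ksub (n - k + 2) (chainL k l)) (Ksub (n - k + 2) (chainL k l))) b b' := by
    intro a b a' b'
    simp only [LinearMap.domRestrict₁₂_apply]
    rw [chainSL_coe, chainSL_coe]
    exact mqL_chainS hk hkn B l hl1.1 hlk.1 a.2 a'.2 b.2 b'.2
  obtain ⟨e, he⟩ := quot_equiv_of_isometry
    ((mqL k B).domRestrict₁₂ (Ksub k l) (Ksub k l))
    ((mqL (n - k + 2) B).domRestrict₁₂
      (Ksub (n - k + 2) (chainL k l)) (Ksub (n - k + 2) (chainL k l)))
    ((mqL n B).domRestrict₁₂ (Ksub n l) (Ksub n l))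
    (chainSL hk hkn l) hbij hiso
  refine ⟨e, ?_, ?_⟩
  · rintro ⟨u1, u2⟩ ⟨u1', u2'⟩
    obtain ⟨x, rfl⟩ := Submodule.Quotient.mk_surjective _ u1
    obtain ⟨y, rfl⟩ := Submodule.Quotient.mk_surjective _ u2
    obtain ⟨x', rfl⟩ := Submodule.Quotient.mk_surjective _ u1'
    obtain ⟨y', rfl⟩ := Submodule.Quotient.mk_surjective _ u2'
    rw [he, he, ht3]
    have h2 : prodBF t1 t2 (Submodule.Quotient.mk x, Submodule.Quotient.mk y)
        (Submodule.Quotient.mk x', Submodule.Quotient.mk y')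
        = t1 (Submodule.Quotient.mk x) (Submodule.Quotient.mk x')
          + t2 (Submodule.Quotient.mk y) (Submodule.Quotient.mk y') := by
      simp [prodBF]
    rw [h2, ht1, ht2, chainSL_coe, chainSL_coe]
    exact mqL_chainS hk hkn B l hl1.1 hlk.1 x.2 x'.2 y.2 y'.2
  · intro x y z hz
    rw [he]
    congr 1
    apply Subtype.ext
    rw [chainSL_coe]
    exact hz.symm
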